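/- arXiv:1003.2159 — 2 statements merged into one kernel-verified Lean document; each statement's English description precedes it below -/
import Mathlib

section
/- Under hard truncation (n P(‖H‖ > M_n) → ∞, M_n → ∞, E L² < ∞, L ≥ 0 independent of H), define U_n := B_n^{-1}[H·1(‖H‖ ≤ M_n) + (H/‖H‖)(M_n + L)·1(‖H‖ > M_n)] with B_n := [n M_n² P(‖H‖ > M_n)]^{1/2}. Then for every fixed t > 0, lim_{n→∞} n·E[‖U_n‖·1(‖U_n‖ > t)] = 0. -/
/-!
Write `p_n = P(‖H‖ > M_n)`, so that `B_n² = n M_n² p_n` and `M_n / B_n = (n p_n)^{-1/2} → 0`.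
Once `M_n ≤ B_n t / 2`, the event `‖U_n‖ > t` forces `‖H‖ > M_n` and `L ≥ B_n t / 2`; trading one
factor `M_n + L` for `2 L / (B_n t)` gives
`‖U_n‖ 1(‖U_n‖ > t) ≤ 1(‖H‖ > M_n) · 2 (M_n L + L²) / (B_n² t)`.
By independence its expectation is at most `p_n · 2 (M_n E L + E L²) / (B_n² t)`, and `n` times
this is `2 (E L / M_n + E L² / M_n²) / t → 0`.
-/

open MeasureTheory Filter ProbabilityTheory

noncomputable def normTail {E : Type*} [Norm E] (t : ℝ) (x : E) : ℝ :=
  if t < ‖x‖ then ‖x‖ else 0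

lemma normTail_nonneg {E : Type*} [SeminormedAddGroup E] (t : ℝ) (x : E) : 0 ≤ normTail t x := by
  unfold normTail
  split_ifs <;> positivity

section HardTruncation

variable {B : Type*} [NormedAddCommGroup B] [NormedSpace ℝ B]

/-- The paper's `U_n` is `B_n⁻¹ • hardTruncation M_n L H`. -/
noncomputable def hardTruncation (M l : ℝ) (x : B) : B :=
  if ‖x‖ ≤ M then x else ((M + l) / ‖x‖) • x

lemma hardTruncation_of_norm_le {M l : ℝ} {x : B} (hx : ‖x‖ ≤ M) :
    hardTruncation M l x = x := if_pos hx

lemma norm_hardTruncation_of_lt_norm {M l : ℝ} {x : B} (hM : 0 ≤ M) (hl : 0 ≤ l)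
    (hx : M < ‖x‖) : ‖hardTruncation M l x‖ = M + l := by
  rw [hardTruncation, if_neg hx.not_ge, norm_smul, Real.norm_of_nonneg (by positivity),
    div_mul_cancel₀ _ (hM.trans_lt hx).ne']

lemma normTail_smul_hardTruncation_le (x : B) {M l b t : ℝ} (hM : 0 < M) (hl : 0 ≤ l)
    (ht : 0 < t) (hMbt : 2 * M ≤ b * t) :
    normTail t (b⁻¹ • hardTruncation M l x) ≤
      if M < ‖x‖ then 2 / (b ^ 2 * t) * (M * l + l ^ 2) else 0 := by
  have hb : 0 < b := pos_of_mul_pos_left (by linarith) ht.le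
  rw [normTail, norm_smul, Real.norm_of_nonneg (inv_nonneg.2 hb.le), ← div_eq_inv_mul]
  by_cases hx : M < ‖x‖
  · rw [norm_hardTruncation_of_lt_norm hM.le hl hx, if_pos hx]
    split_ifs with htail
    · have hl_large : b * t / 2 ≤ l := by
        rw [lt_div_iff₀ hb] at htail
        linarith
      rw [div_le_iff₀ hb]
      calc M + l ≤ (M + l) * (2 * l / (b * t)) := by
            refine le_mul_of_one_le_right (by positivity) ?_
            rw [le_div_iff₀ (by positivity)]
            linarith
        _ = 2 / (b ^ 2 * t) * (M * l + l ^ 2) * b := by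
            field_simp
    · positivity
  · rw [hardTruncation_of_norm_le (not_lt.1 hx), if_neg hx, if_neg]
    rw [not_lt, div_le_iff₀ hb]
    nlinarith [norm_nonneg x]

variable {Ω : Type*} [MeasurableSpace Ω] {μ : Measure Ω} [MeasurableSpace B]
  [OpensMeasurableSpace B] {H : Ω → B} {L : Ω → ℝ}

lemma integral_normTail_smul_hardTruncation_le (hH : Measurable H) (hL : Measurable L)
    (hLnonneg : ∀ ω, 0 ≤ L ω) (hL1 : Integrable L μ) (hL2 : Integrable (fun ω => L ω ^ 2) μ)
    (hindep : IndepFun L H μ) {M b t : ℝ} (hM : 0 < M) (ht : 0 < t) (hMbt : 2 * M ≤ b * t) :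
    ∫ ω, normTail t (b⁻¹ • hardTruncation M (L ω) (H ω)) ∂μ ≤
      μ.real {ω | M < ‖H ω‖} * (2 / (b ^ 2 * t) * (M * ∫ ω, L ω ∂μ + ∫ ω, L ω ^ 2 ∂μ)) := by
  set g : ℝ → ℝ := fun l => 2 / (b ^ 2 * t) * (M * l + l ^ 2)
  have hS : MeasurableSet {ω | M < ‖H ω‖} := measurableSet_lt measurable_const hH.norm
  have hg_int : Integrable (fun ω => g (L ω)) μ := ((hL1.const_mul M).add hL2).const_mul _
  have hg_integral :
      ∫ ω, g (L ω) ∂μ = 2 / (b ^ 2 * t) * (M * ∫ ω, L ω ∂μ + ∫ ω, L ω ^ 2 ∂μ) := by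
    rw [integral_const_mul, integral_add (hL1.const_mul M) hL2, integral_const_mul]
  have hsplit :
      ∫ ω in {ω | M < ‖H ω‖}, g (L ω) ∂μ = μ.real {ω | M < ‖H ω‖} * ∫ ω, g (L ω) ∂μ :=
    Indep.setIntegral_eq_mul hH.comap_le hindep.symm hL.aemeasurable
      ⟨{x | M < ‖x‖}, measurableSet_lt measurable_const measurable_norm, rfl⟩
      (by fun_prop)
  rw [← hg_integral, ← hsplit, ← integral_indicator hS]
  refine integral_mono_of_nonneg (.of_forall fun ω => normTail_nonneg _ _)
    (hg_int.indicator hS) (.of_forall fun ω => ?_)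
  simpa only [Set.indicator_apply, Set.mem_ofPred_eq] using
    normTail_smul_hardTruncation_le (H ω) hM (hLnonneg ω) ht hMbt

/-- With `b = √(c M² p)`, `p = P(‖H‖ > M)`, the condition `c p t² ≥ 4` says `2 M ≤ b t`. -/
lemma mul_integral_normTail_smul_hardTruncation_le (hH : Measurable H) (hL : Measurable L)
    (hLnonneg : ∀ ω, 0 ≤ L ω) (hL1 : Integrable L μ) (hL2 : Integrable (fun ω => L ω ^ 2) μ)
    (hindep : IndepFun L H μ) {c M t : ℝ} (hM : 0 < M) (ht : 0 < t)
    (hc : 4 / t ^ 2 ≤ c * μ.real {ω | M < ‖H ω‖}) :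
    c * ∫ ω, normTail t ((√(c * M ^ 2 * μ.real {ω' | M < ‖H ω'‖}))⁻¹ •
        hardTruncation M (L ω) (H ω)) ∂μ ≤
      2 / t * ((∫ ω, L ω ∂μ) / M + (∫ ω, L ω ^ 2 ∂μ) / M ^ 2) := by
  set p := μ.real {ω | M < ‖H ω‖}
  set b := √(c * M ^ 2 * p)
  replace hc : 4 ≤ c * p * t ^ 2 := (div_le_iff₀ (by positivity)).1 hc
  have hcp_pos : 0 < c * p := pos_of_mul_pos_left (by linarith) (sq_nonneg t)
  have hc_pos : 0 < c := pos_of_mul_pos_left hcp_pos measureReal_nonneg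
  have hp_pos : 0 < p := pos_of_mul_pos_right hcp_pos hc_pos.le
  have hb2 : b ^ 2 = c * M ^ 2 * p := Real.sq_sqrt (by positivity)
  have hMbt : 2 * M ≤ b * t := by
    refine (pow_le_pow_iff_left₀ (by positivity) (by positivity) two_ne_zero).1 ?_
    calc (2 * M) ^ 2 = 4 * M ^ 2 := by ring
      _ ≤ c * p * t ^ 2 * M ^ 2 := by gcongr
      _ = (b * t) ^ 2 := by rw [mul_pow, hb2]; ring
  calc _ ≤ c * (p * (2 / (b ^ 2 * t) * (M * ∫ ω, L ω ∂μ + ∫ ω, L ω ^ 2 ∂μ))) :=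
        mul_le_mul_of_nonneg_left (integral_normTail_smul_hardTruncation_le hH hL hLnonneg hL1
          hL2 hindep hM ht hMbt) hc_pos.le
    _ = 2 / t * ((∫ ω, L ω ∂μ) / M + (∫ ω, L ω ^ 2 ∂μ) / M ^ 2) := by
        rw [hb2]
        field_simp

end HardTruncation

lemma tendsto_div_add_div_sq_nhds_zero {ι : Type*} {l : Filter ι} {f : ι → ℝ}
    (hf : Tendsto f l atTop) (a c : ℝ) : Tendsto (fun i => a / f i + c / f i ^ 2) l (nhds 0) := by
  simpa using (tendsto_const_nhds.div_atTop hf).add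
    (tendsto_const_nhds.div_atTop ((tendsto_pow_atTop two_ne_zero).comp hf))

theorem hard_truncation_uniform_integrability_general
    {Ω : Type*} [MeasurableSpace Ω] (μ : Measure Ω) [IsProbabilityMeasure μ]
    {B : Type*} [NormedAddCommGroup B] [NormedSpace ℝ B]
    [MeasurableSpace B] [BorelSpace B]
    (H : Ω → B) (hH : Measurable H)
    (L : Ω → ℝ) (hL : Measurable L) (hLnonneg : ∀ ω, 0 ≤ L ω)
    (hL2 : Integrable (fun ω => (L ω) ^ 2) μ)
    (hindep : ProbabilityTheory.IndepFun L H μ)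
    (M : ℕ → ℝ) (hM : Tendsto M atTop atTop)
    (hhard : Tendsto (fun n : ℕ => (n : ℝ) * (μ {ω | M n < ‖H ω‖}).toReal)
      atTop atTop) :
    ∀ t : ℝ, 0 < t →
      Tendsto (fun n : ℕ =>
          (n : ℝ) * ∫ ω,
            (let Bn := Real.sqrt ((n : ℝ) * (M n) ^ 2 * (μ {ω' | M n < ‖H ω'‖}).toReal)
             let Un := Bn⁻¹ •
               (if ‖H ω‖ ≤ M n then H ω else ((M n + L ω) / ‖H ω‖) • H ω)
             if t < ‖Un‖ then ‖Un‖ else 0) ∂μ)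
        atTop (nhds 0) := by
  intro t ht
  have hL1 : Integrable L μ :=
    ((memLp_two_iff_integrable_sq hL.aestronglyMeasurable).2 hL2).integrable one_le_two
  have hbound := (tendsto_div_add_div_sq_nhds_zero hM (∫ ω, L ω ∂μ) (∫ ω, L ω ^ 2 ∂μ)).const_mul
    (2 / t)
  rw [mul_zero] at hbound
  refine squeeze_zero' (.of_forall fun n =>
    mul_nonneg n.cast_nonneg (integral_nonneg fun ω => normTail_nonneg _ _)) ?_ hbound
  filter_upwards [hM.eventually_gt_atTop 0, hhard.eventually_ge_atTop (4 / t ^ 2)]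
    with n hMn hnp
  exact mul_integral_normTail_smul_hardTruncation_le hH hL hLnonneg hL1 hL2 hindep hMn ht hnp

/-- Under hard truncation, the normalized truncated variables
`U_n = B_n^{-1}[H·1(‖H‖≤M_n) + (H/‖H‖)(M_n+L)·1(‖H‖>M_n)]` satisfy
`n·E[‖U_n‖ 1(‖U_n‖ > t)] → 0` for every `t > 0`. -/
theorem hard_truncation_uniform_integrability
    {Ω : Type*} [MeasurableSpace Ω] (μ : Measure Ω) [IsProbabilityMeasure μ]
    {B : Type*} [NormedAddCommGroup B] [NormedSpace ℝ B] [CompleteSpace B]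
    [SecondCountableTopology B] [MeasurableSpace B] [BorelSpace B]
    (H : Ω → B) (hH : Measurable H)
    (L : Ω → ℝ) (hL : Measurable L) (hLnonneg : ∀ ω, 0 ≤ L ω)
    (hL2 : Integrable (fun ω => (L ω) ^ 2) μ)
    (hindep : ProbabilityTheory.IndepFun L H μ)
    (M : ℕ → ℝ) (hM : Tendsto M atTop atTop)
    (hhard : Tendsto (fun n : ℕ => (n : ℝ) * (μ {ω | M n < ‖H ω‖}).toReal)
      atTop atTop) :
    ∀ t : ℝ, 0 < t →
      Tendsto (fun n : ℕ =>
          (n : ℝ) * ∫ ω,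
            (let Bn := Real.sqrt ((n : ℝ) * (M n) ^ 2 * (μ {ω' | M n < ‖H ω'‖}).toReal)
             let Un := Bn⁻¹ •
               (if ‖H ω‖ ≤ M n then H ω else ((M n + L ω) / ‖H ω‖) • H ω)
             if t < ‖Un‖ then ‖Un‖ else 0) ∂μ)
        atTop (nhds 0) :=
  hard_truncation_uniform_integrability_general μ H hH L hL hLnonneg hL2 hindep M hM hhard
end

section
/- Fix p ∈ (1,2), K > 0, and set a_j := K(log(max(j,2)))^{(1−p)/2} and X := Σ_j a_j ε_j e_j with (ε_j) i.i.d. Rademacher, a c_0-valued bounded symmetric random variable. Then with X_1, X_2, … i.i.d. copies of X, n^{-1/p} Σ_{i=1}^n X_i does not converge to 0 in probability; specifically, lim sup_n Π_{j=1}^∞ P(|Σ_{k=1}^n ε_k| ≤ n^{1/p} a_j^{-1}) < 1. -/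
/-!
Truncate the product at `l_n = ⌊exp (n ^ (2/p))⌋`. For `j < l_n` one has `log j ≤ n ^ (2/p)`,
which together with `p < 2` places the threshold `t = n ^ (1/p) / a_j` in the window
`[K √n, n / K]` where the Rademacher lower-tail bound applies, so each of the first `l_n`
factors is at most `1 - exp (-K t² / n) ≤ 1 - exp (-n / K) ≤ 1 - 1 / l_n`. All factors lie in
`[0, 1]`, hence the whole product is at most `(1 - 1 / l_n) ^ l_n ≤ exp (-1)`.
-/

open MeasureTheory Filter Real

lemma tprod_le_prod_of_le_one {ι : Type*} {f : ι → ℝ} (h0 : ∀ i, 0 ≤ f i) (h1 : ∀ i, f i ≤ 1)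
    (s : Finset ι) : ∏' i, f i ≤ ∏ i ∈ s, f i := by
  have hbdd : BddBelow (Set.range fun s : Finset ι => ∏ i ∈ s, f i) :=
    ⟨0, Set.forall_mem_range.2 fun s => Finset.prod_nonneg fun i _ => h0 i⟩
  have hprod : HasProd f (⨅ s : Finset ι, ∏ i ∈ s, f i) :=
    tendsto_atTop_ciInf (Finset.prod_anti_set_of_le_one h0 h1) hbdd
  exact hprod.tprod_eq ▸ ciInf_le hbdd s

lemma tprod_le_exp_neg_one {f : ℕ → ℝ} (h0 : ∀ j, 0 ≤ f j) (h1 : ∀ j, f j ≤ 1) {l : ℕ}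
    (hl : 0 < l) (hfl : ∀ j < l, f j ≤ 1 - 1 / l) : ∏' j, f j ≤ exp (-1) :=
  calc ∏' j, f j ≤ ∏ j ∈ Finset.range l, f j := tprod_le_prod_of_le_one h0 h1 _
    _ ≤ ∏ _j ∈ Finset.range l, (1 - 1 / l : ℝ) :=
        Finset.prod_le_prod (fun j _ => h0 j) fun j hj => hfl j (Finset.mem_range.1 hj)
    _ = (1 - 1 / l) ^ l := by rw [Finset.prod_const, Finset.card_range]
    _ ≤ exp (-1) := one_sub_div_pow_le_exp_neg (by exact_mod_cast hl)

section Probability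

variable {Ω : Type*} [MeasurableSpace Ω] (μ : Measure Ω) [IsProbabilityMeasure μ]

lemma measureReal_abs_le_le_one_sub {S : Ω → ℝ} (hS : Measurable S) (t : ℝ) :
    μ.real {ω | |S ω| ≤ t} ≤ 1 - μ.real {ω | t < S ω} := by
  have hsub : {ω | |S ω| ≤ t} ⊆ {ω | t < S ω}ᶜ := fun ω (hω : |S ω| ≤ t) =>
    not_lt.2 ((le_abs_self (S ω)).trans hω)
  rw [← probReal_compl_eq_one_sub (measurableSet_lt measurable_const hS)]
  exact measureReal_mono hsub

lemma measureReal_abs_le_le_one_sub_exp {S : Ω → ℝ} (hS : Measurable S) {K n t : ℝ}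
    (hK : 0 < K) (hn : 0 < n) (ht0 : 0 ≤ t) (htn : t ≤ n / K)
    (htail : exp (-K * t ^ 2 / n) ≤ μ.real {ω | t < S ω}) :
    μ.real {ω | |S ω| ≤ t} ≤ 1 - exp (-(n / K)) := by
  have hKt : K * t ≤ n := by rwa [le_div_iff₀ hK, mul_comm] at htn
  have hexponent : -(n / K) ≤ -K * t ^ 2 / n := by
    rw [neg_mul, neg_div, neg_le_neg_iff, div_le_div_iff₀ hn hK]
    nlinarith [mul_nonneg hK.le ht0]
  linarith [measureReal_abs_le_le_one_sub μ hS t, exp_le_exp.2 hexponent]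

end Probability

section Threshold

variable {p K : ℝ}

lemma rpow_sub_one_le_log_max_two_rpow (hp : 1 ≤ p) {n : ℝ} (hn : 1 ≤ n) {x : ℝ}
    (hx : x ≤ exp (n ^ (2 / p))) : n ^ (1 / p - 1) ≤ log (max x 2) ^ ((1 - p) / 2) := by
  have hL : 0 < log (max x 2) := log_pos (one_lt_two.trans_le (le_max_right _ _))
  have hLn : log (max x 2) ≤ n ^ (2 / p) := by
    have h2 : (2 : ℝ) ≤ exp (n ^ (2 / p)) := by
      linarith [add_one_le_exp (n ^ (2 / p)), one_le_rpow hn (by positivity : 0 ≤ 2 / p)]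
    rw [log_le_iff_le_exp (by positivity)]
    exact max_le hx h2
  calc n ^ (1 / p - 1) = (n ^ (2 / p)) ^ ((1 - p) / 2) := by
        rw [← rpow_mul (by positivity)]; congr 1; field_simp
    _ ≤ log (max x 2) ^ ((1 - p) / 2) := rpow_le_rpow_of_nonpos hL hLn (by linarith)

lemma rpow_mul_inv_mem_Icc (hp : 1 ≤ p) (hK : 0 < K) {n : ℝ} (hn : 1 ≤ n)
    (hsmall : K ^ 2 * log 2 ^ ((1 - p) / 2) ≤ n ^ (1 / p - 1 / 2)) {x : ℝ}
    (hx : x ≤ exp (n ^ (2 / p))) :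
    n ^ (1 / p) * (K * log (max x 2) ^ ((1 - p) / 2))⁻¹ ∈ Set.Icc (K * √n) (n / K) := by
  have hn0 : 0 < n := one_pos.trans_le hn
  set b := log (max x 2) ^ ((1 - p) / 2)
  have hlog2 : 0 < log 2 := log_pos one_lt_two
  have hb : 0 < b := rpow_pos_of_pos (hlog2.trans_le (log_le_log two_pos (le_max_right _ _))) _
  have hb2 : b ≤ log 2 ^ ((1 - p) / 2) :=
    rpow_le_rpow_of_nonpos hlog2 (log_le_log two_pos (le_max_right _ _)) (by linarith)
  have hnb : n ^ (1 / p - 1) ≤ b := rpow_sub_one_le_log_max_two_rpow hp hn hx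
  rw [← div_eq_mul_inv, Set.mem_Icc, le_div_iff₀ (by positivity),
    div_le_div_iff₀ (by positivity) hK]
  constructor
  · calc K * √n * (K * b) = √n * (K ^ 2 * b) := by ring
      _ ≤ n ^ (1 / 2 : ℝ) * n ^ (1 / p - 1 / 2) := by
          rw [sqrt_eq_rpow]
          gcongr
          exact (mul_le_mul_of_nonneg_left hb2 (by positivity)).trans hsmall
      _ = n ^ (1 / p) := by rw [← rpow_add hn0]; ring_nf
  · calc n ^ (1 / p) * K = n * n ^ (1 / p - 1) * K := by
          rw [rpow_sub_one hn0.ne']; field_simp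
      _ ≤ n * (K * b) := by nlinarith [mul_le_mul_of_nonneg_left hnb hn0.le]

lemma exp_le_floor_exp {x y : ℝ} (hx : 0 ≤ x) (hxy : x + 1 ≤ y) : exp x ≤ ⌊exp y⌋₊ := by
  have hexp : exp x + 1 ≤ exp (x + 1) := by
    rw [exp_add]; nlinarith [add_one_le_exp (1 : ℝ), one_le_exp hx]
  linarith [Nat.sub_one_lt_floor (exp y), exp_le_exp.2 hxy]

lemma eventually_truncation_bounds (hp1 : 1 < p) (hp2 : p < 2) (hK : 0 < K) :
    ∀ᶠ n : ℕ in atTop, 1 ≤ n ∧ K ^ 2 * log 2 ^ ((1 - p) / 2) ≤ (n : ℝ) ^ (1 / p - 1 / 2) ∧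
      exp (n / K) ≤ ⌊exp ((n : ℝ) ^ (2 / p))⌋₊ := by
  have hp0 : 0 < p := by linarith
  have hgrowth {q : ℝ} (hq : 0 < q) (c : ℝ) : ∀ᶠ n : ℕ in atTop, c ≤ (n : ℝ) ^ q :=
    ((tendsto_rpow_atTop hq).comp tendsto_natCast_atTop_atTop).eventually_ge_atTop c
  have hq1 : 0 < 1 / p - 1 / 2 := by
    rw [sub_pos, one_div_lt_one_div (by norm_num) hp0]; exact hp2
  have hq2 : 0 < 2 / p - 1 := by rw [sub_pos, lt_div_iff₀ hp0]; linarith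
  filter_upwards [eventually_ge_atTop 1, hgrowth hq1 (K ^ 2 * log 2 ^ ((1 - p) / 2)),
    hgrowth hq2 (1 / K + 1)] with n hn hsmall hlarge
  refine ⟨hn, hsmall, exp_le_floor_exp (by positivity) ?_⟩
  have hn1 : (1 : ℝ) ≤ n := by exact_mod_cast hn
  have hsplit : (n : ℝ) ^ (2 / p) = n * (n : ℝ) ^ (2 / p - 1) := by
    rw [rpow_sub_one (by positivity)]; field_simp
  have hexpand : (n : ℝ) * (1 / K + 1) = n / K + n := by ring
  rw [hsplit]
  linarith [mul_le_mul_of_nonneg_left hlarge (by positivity : (0 : ℝ) ≤ n)]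

end Threshold

theorem example2_no_lln_rate_general
    {Ω : Type*} [MeasurableSpace Ω] (μ : Measure Ω) [IsProbabilityMeasure μ]
    (p : ℝ) (hp1 : 1 < p) (hp2 : p < 2)
    (ε : ℕ → Ω → ℝ) (hmeas : ∀ i, Measurable (ε i))
    (K : ℝ) (hK : 0 < K)
    (hlower : ∀ n : ℕ, 1 ≤ n → ∀ t : ℝ,
      K * Real.sqrt n ≤ t → t ≤ (n : ℝ) / K →
      Real.exp (-K * t ^ 2 / n) ≤ (μ {ω | t < ∑ i ∈ Finset.range n, ε i ω}).toReal)
    (a : ℕ → ℝ) (ha : ∀ j, a j = K * (Real.log (max (j : ℝ) 2)) ^ ((1 - p) / 2)) :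
    Filter.limsup (fun n : ℕ =>
        ∏' j : ℕ,
          (μ {ω | |∑ k ∈ Finset.range n, ε k ω| ≤ (n : ℝ) ^ (1 / p) * (a j)⁻¹}).toReal)
      atTop < 1 := by
  have hfactors : ∀ᶠ n : ℕ in atTop, ∏' j : ℕ,
      (μ {ω | |∑ k ∈ Finset.range n, ε k ω| ≤ (n : ℝ) ^ (1 / p) * (a j)⁻¹}).toReal ≤ exp (-1) := by
    filter_upwards [eventually_truncation_bounds hp1 hp2 hK] with n ⟨hn, hsmall, hl⟩
    set l := ⌊exp ((n : ℝ) ^ (2 / p))⌋₊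
    have hn1 : (1 : ℝ) ≤ n := by exact_mod_cast hn
    have hl0 : 0 < l := Nat.one_le_cast.1 ((one_le_exp (by positivity)).trans hl)
    refine tprod_le_exp_neg_one (fun j => measureReal_nonneg) (fun j => measureReal_le_one) hl0
      fun j hj => ?_
    have hj : (j : ℝ) ≤ exp ((n : ℝ) ^ (2 / p)) :=
      (Nat.cast_le.2 hj.le).trans (Nat.floor_le (exp_pos _).le)
    obtain ⟨hlow, hup⟩ := rpow_mul_inv_mem_Icc hp1.le hK hn1 hsmall hj
    rw [ha j]
    calc _ ≤ 1 - exp (-(n / K)) := measureReal_abs_le_le_one_sub_exp μ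
            (Finset.measurable_sum _ fun i _ => hmeas i) hK (by positivity)
            ((by positivity : 0 ≤ K * √(n : ℝ)).trans hlow) hup (hlower n hn _ hlow hup)
      _ ≤ 1 - 1 / l := by
          rw [exp_neg, ← one_div]; gcongr
  have hbounded : IsCoboundedUnder (· ≤ ·) atTop (fun n : ℕ => ∏' j : ℕ,
      (μ {ω | |∑ k ∈ Finset.range n, ε k ω| ≤ (n : ℝ) ^ (1 / p) * (a j)⁻¹}).toReal) :=
    isCoboundedUnder_le_of_le atTop fun n => tprod_nonneg fun j => ENNReal.toReal_nonneg
  exact (limsup_le_of_le hbounded hfactors).trans_lt (by simp)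

/-- Example 2 of the paper: with `a_j = K (log (max j 2))^{(1-p)/2}` for `p ∈ (1,2)` and
`K` the constant of the Rademacher lower-tail bound, the infinite products
`Π_j P(|Σ_{k<n} ε_k| ≤ n^{1/p} a_j^{-1})` have limsup `< 1`; hence
`n^{-1/p} Σ_{i≤n} X_i` does not converge to `0` in probability. -/
theorem example2_no_lln_rate
    {Ω : Type*} [MeasurableSpace Ω] (μ : Measure Ω) [IsProbabilityMeasure μ]
    (p : ℝ) (hp1 : 1 < p) (hp2 : p < 2)
    (ε : ℕ → Ω → ℝ) (hmeas : ∀ i, Measurable (ε i))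
    (hindep : ProbabilityTheory.iIndepFun ε μ)
    (hrad : ∀ i, μ {ω | ε i ω = 1} = ENNReal.ofReal (1/2) ∧
                 μ {ω | ε i ω = -1} = ENNReal.ofReal (1/2))
    (K : ℝ) (hK : 0 < K)
    (hlower : ∀ n : ℕ, 1 ≤ n → ∀ t : ℝ,
      K * Real.sqrt n ≤ t → t ≤ (n : ℝ) / K →
      Real.exp (-K * t ^ 2 / n) ≤ (μ {ω | t < ∑ i ∈ Finset.range n, ε i ω}).toReal)
    (a : ℕ → ℝ) (ha : ∀ j, a j = K * (Real.log (max (j : ℝ) 2)) ^ ((1 - p) / 2)) :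
    Filter.limsup (fun n : ℕ =>
        ∏' j : ℕ,
          (μ {ω | |∑ k ∈ Finset.range n, ε k ω| ≤ (n : ℝ) ^ (1 / p) * (a j)⁻¹}).toReal)
      atTop < 1 :=
  example2_no_lln_rate_general μ p hp1 hp2 ε hmeas K hK hlower a ha
end
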